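/- arXiv:1803.02328 — 2 statements merged into one kernel-verified Lean document; each statement's English description precedes it below -/
import Mathlib

section
/- Let A be a nonnegative irreducible n×n matrix with spectral radius ρ, and let S be a nonempty proper subset of {1,...,n}. Then the Perron complement P_S(A) = A_{SS} − A_{SS̄}(A_{S̄S̄} − ρI)⁻¹ A_{S̄S} is a well-defined nonnegative matrix. -/
open Matrix

/-- Submatrix of `M` with rows indexed by `R` and columns by `C`. -/
def subm {n : ℕ} {α : Type*} (M : Matrix (Fin n) (Fin n) α) (R C : Finset (Fin n)) :
    Matrix R C α := fun i j => M i.1 j.1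

/-- Spectral radius of a complex matrix: the sup of the moduli of its eigenvalues. -/
noncomputable def specRadC {m : Type*} [Fintype m] [DecidableEq m] (A : Matrix m m ℂ) : ℝ :=
  sSup ((fun z : ℂ => ‖z‖) '' spectrum ℂ A)

/-- Spectral radius of a real matrix, via complexification. -/
noncomputable def specRad {m : Type*} [Fintype m] [DecidableEq m] (A : Matrix m m ℝ) : ℝ :=
  specRadC (A.map Complex.ofReal)

/-- A nonnegative matrix is irreducible iff its directed graph (edge `i → j` iff
`0 < A i j`) is strongly connected. -/
def Irred {m : Type*} (A : Matrix m m ℝ) : Prop :=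
  ∀ i j, Relation.TransGen (fun a b => 0 < A a b) i j

/-- The isospectral reduction `R_S(M)(λ) = M_SS − M_SS̄ (M_S̄S̄ − λI)⁻¹ M_S̄S`,
evaluated at `λ = l`. -/
noncomputable def red {n : ℕ} {α : Type*} [Field α] (M : Matrix (Fin n) (Fin n) α)
    (S : Finset (Fin n)) (l : α) : Matrix S S α :=
  subm M S S - subm M S Sᶜ * (subm M Sᶜ Sᶜ - l • 1)⁻¹ * subm M Sᶜ S

set_option linter.unusedSectionVars false

section Helpers

variable {ι : Type*} [Fintype ι] [DecidableEq ι]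

lemma mulVec_entry' (M : Matrix ι ι ℝ) (x : ι → ℝ) (i : ι) :
    (M *ᵥ x) i = ∑ j, M i j * x j := rfl

lemma mulVec_nonneg' {M : Matrix ι ι ℝ} (hM : ∀ i j, 0 ≤ M i j) {x : ι → ℝ}
    (hx : ∀ i, 0 ≤ x i) : ∀ i, 0 ≤ (M *ᵥ x) i := fun i =>
  Finset.sum_nonneg fun j _ => mul_nonneg (hM i j) (hx j)

lemma mulVec_mono' {M : Matrix ι ι ℝ} (hM : ∀ i j, 0 ≤ M i j) {x y : ι → ℝ}
    (hxy : ∀ i, x i ≤ y i) : ∀ i, (M *ᵥ x) i ≤ (M *ᵥ y) i := fun i =>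
  Finset.sum_le_sum fun j _ => mul_le_mul_of_nonneg_left (hxy j) (hM i j)

lemma pow_entry_nonneg' {M : Matrix ι ι ℝ} (hM : ∀ i j, 0 ≤ M i j) :
    ∀ k i j, 0 ≤ (M ^ k) i j := by
  intro k
  induction k with
  | zero => intro i j; rw [pow_zero, Matrix.one_apply]; positivity
  | succ k ih =>
      intro i j
      rw [pow_succ, Matrix.mul_apply]
      exact Finset.sum_nonneg fun c _ => mul_nonneg (ih i c) (hM c j)

lemma smul_one_sub_mulVec (r : ℝ) (M : Matrix ι ι ℝ) (x : ι → ℝ) :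
    (r • (1 : Matrix ι ι ℝ) - M) *ᵥ x = r • x - M *ᵥ x := by
  rw [Matrix.sub_mulVec, Matrix.smul_mulVec, Matrix.one_mulVec]

/-- The key finite-dimensional lemma: if `M` is entrywise nonnegative and has a positive
super-eigenvector `w` with rate `θ < r`, then `r•1 - M` is invertible with nonnegative
inverse. -/
lemma key_lemma {M : Matrix ι ι ℝ} (hM : ∀ i j, 0 ≤ M i j) {w : ι → ℝ} (hw : ∀ i, 0 < w i)
    {θ r : ℝ} (hθr : θ < r) (hMw : ∀ i, (M *ᵥ w) i ≤ θ * w i) :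
    IsUnit (r • (1 : Matrix ι ι ℝ) - M).det ∧
      ∀ i j, 0 ≤ (r • (1 : Matrix ι ι ℝ) - M)⁻¹ i j := by
  have hdet : IsUnit (r • (1 : Matrix ι ι ℝ) - M).det := by
    rw [isUnit_iff_ne_zero]
    intro hdet0
    obtain ⟨v, hv0, hveq⟩ := (Matrix.exists_mulVec_eq_zero_iff).mpr hdet0
    rw [smul_one_sub_mulVec] at hveq
    have hMv : M *ᵥ v = r • v := by
      have := sub_eq_zero.mp hveq; exact this.symm
    obtain ⟨j₁, hj₁⟩ : ∃ j, v j ≠ 0 := Function.ne_iff.mp hv0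
    obtain ⟨i₀, -, hi₀⟩ := Finset.exists_max_image Finset.univ (fun i => |v i| / w i)
      ⟨j₁, Finset.mem_univ j₁⟩
    set c := |v i₀| / w i₀ with hc_def
    have hc : 0 < c := by
      have h1 : |v j₁| / w j₁ ≤ c := hi₀ j₁ (Finset.mem_univ j₁)
      have h2 : 0 < |v j₁| / w j₁ := div_pos (abs_pos.mpr hj₁) (hw j₁)
      linarith
    have habs : ∀ j, |v j| ≤ c * w j := fun j =>
      (div_le_iff₀ (hw j)).mp (hi₀ j (Finset.mem_univ j))
    have heq : |v i₀| = c * w i₀ := by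
      rw [hc_def, div_mul_cancel₀ _ (hw i₀).ne']
    have h1 : r * |v i₀| ≤ |r| * |v i₀| :=
      mul_le_mul_of_nonneg_right (le_abs_self r) (abs_nonneg _)
    have h2 : |r| * |v i₀| = |(M *ᵥ v) i₀| := by
      rw [hMv]; simp [abs_mul]
    have h3 : |(M *ᵥ v) i₀| ≤ ∑ j, M i₀ j * |v j| := by
      rw [mulVec_entry']
      refine (Finset.abs_sum_le_sum_abs _ _).trans ?_
      refine Finset.sum_le_sum fun j _ => ?_
      rw [abs_mul, abs_of_nonneg (hM i₀ j)]
    have h4 : ∑ j, M i₀ j * |v j| ≤ c * (M *ᵥ w) i₀ := by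
      rw [mulVec_entry', Finset.mul_sum]
      refine Finset.sum_le_sum fun j _ => ?_
      calc M i₀ j * |v j| ≤ M i₀ j * (c * w j) :=
            mul_le_mul_of_nonneg_left (habs j) (hM i₀ j)
        _ = c * (M i₀ j * w j) := by ring
    have h5 : c * (M *ᵥ w) i₀ ≤ c * (θ * w i₀) :=
      mul_le_mul_of_nonneg_left (hMw i₀) hc.le
    have hthis : r * (c * w i₀) ≤ c * (θ * w i₀) := by
      rw [← heq]; linarith
    have hwi : 0 < w i₀ := hw i₀
    have h6 : θ * (c * w i₀) < r * (c * w i₀) :=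
      mul_lt_mul_of_pos_right hθr (mul_pos hc hwi)
    nlinarith [h6, hthis]
  refine ⟨hdet, ?_⟩
  set N := (r • (1 : Matrix ι ι ℝ) - M)⁻¹ with hN_def
  have hMN : (r • (1 : Matrix ι ι ℝ) - M) * N = 1 := Matrix.mul_nonsing_inv _ hdet
  intro i j
  by_contra hneg
  push_neg at hneg
  set x : ι → ℝ := fun i' => N i' j with hx_def
  have hx : ∀ i', ((r • (1 : Matrix ι ι ℝ) - M) *ᵥ x) i' = (1 : Matrix ι ι ℝ) i' j := by
    intro i'
    calc ((r • (1 : Matrix ι ι ℝ) - M) *ᵥ x) i'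
        = ∑ k, (r • (1 : Matrix ι ι ℝ) - M) i' k * N k j := by rw [mulVec_entry']
      _ = ((r • (1 : Matrix ι ι ℝ) - M) * N) i' j := (Matrix.mul_apply).symm
      _ = (1 : Matrix ι ι ℝ) i' j := by rw [hMN]
  obtain ⟨i₀, -, hi₀⟩ := Finset.exists_max_image Finset.univ (fun i' => -x i' / w i')
    ⟨i, Finset.mem_univ i⟩
  set c := -x i₀ / w i₀ with hc_def
  have hc : 0 < c := by
    have h1 : -x i / w i ≤ c := hi₀ i (Finset.mem_univ i)
    have h2 : 0 < -x i / w i := div_pos (by simpa [hx_def] using hneg) (hw i)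
    linarith
  have hxe : ∀ i', -(c * w i') ≤ x i' := by
    intro i'
    have := (div_le_iff₀ (hw i')).mp (hi₀ i' (Finset.mem_univ i'))
    linarith
  have hxeq : x i₀ = -(c * w i₀) := by
    have : -x i₀ = c * w i₀ := by rw [hc_def, div_mul_cancel₀ _ (hw i₀).ne']
    linarith
  have hMx : -(c * (θ * w i₀)) ≤ (M *ᵥ x) i₀ := by
    have h1 : (M *ᵥ fun i' => -(c * w i')) i₀ ≤ (M *ᵥ x) i₀ := mulVec_mono' hM hxe i₀
    have h2 : (M *ᵥ fun i' => -(c * w i')) i₀ = -(c * (M *ᵥ w) i₀) := by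
      simp only [mulVec_entry', Finset.mul_sum, ← Finset.sum_neg_distrib]
      exact Finset.sum_congr rfl fun j' _ => by ring
    have h3 : -(c * (θ * w i₀)) ≤ -(c * (M *ᵥ w) i₀) := by
      have := mul_le_mul_of_nonneg_left (hMw i₀) hc.le
      linarith
    linarith
  have hone : (0:ℝ) ≤ (1 : Matrix ι ι ℝ) i₀ j := by
    rw [Matrix.one_apply]; positivity
  have hcalc : (1 : Matrix ι ι ℝ) i₀ j ≤ -(c * ((r - θ) * w i₀)) := by
    have h := hx i₀
    rw [smul_one_sub_mulVec] at h
    have h' : r * x i₀ - (M *ᵥ x) i₀ = (1 : Matrix ι ι ℝ) i₀ j := by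
      simpa using h
    rw [hxeq] at h'
    nlinarith [hw i₀, hMx, h']
  have hpos : 0 < c * ((r - θ) * w i₀) :=
    mul_pos hc (mul_pos (sub_pos.mpr hθr) (hw i₀))
  linarith

lemma reach_of_transGen {M : Matrix ι ι ℝ} (hM : ∀ i j, 0 ≤ M i j) {a b : ι}
    (h : Relation.TransGen (fun x y => 0 < M x y) a b) : ∃ k, 0 < (M ^ k) a b := by
  induction h with
  | single h' => exact ⟨1, by simpa using h'⟩
  | @tail b c hab hbc ih =>
      obtain ⟨k, hk⟩ := ih
      refine ⟨k + 1, ?_⟩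
      rw [pow_succ, Matrix.mul_apply]
      calc (0:ℝ) < (M ^ k) a b * M b c := mul_pos hk hbc
        _ ≤ ∑ x, (M ^ k) a x * M x c :=
            Finset.single_le_sum
              (fun x _ => mul_nonneg (pow_entry_nonneg' hM k a x) (hM x c))
              (Finset.mem_univ b)

lemma exists_posQ {M : Matrix ι ι ℝ} (hM : ∀ i j, 0 ≤ M i j)
    (hirr : ∀ i j, Relation.TransGen (fun x y => 0 < M x y) i j) :
    ∃ Q : Matrix ι ι ℝ, (∀ i j, 0 < Q i j) ∧ M * Q = Q * M := by
  classical
  set k : ι × ι → ℕ := fun p => (reach_of_transGen hM (hirr p.1 p.2)).choose with hk_def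
  set m := Finset.univ.sup k with hm_def
  refine ⟨∑ l ∈ Finset.range (m + 1), M ^ l, ?_, ?_⟩
  · intro i j
    have hkm : k (i, j) ≤ m := Finset.le_sup (Finset.mem_univ (i, j))
    have hmem : k (i, j) ∈ Finset.range (m + 1) := Finset.mem_range.mpr (by omega)
    have hterm : 0 < (M ^ k (i, j)) i j :=
      (reach_of_transGen hM (hirr i j)).choose_spec
    calc (0:ℝ) < (M ^ k (i, j)) i j := hterm
      _ ≤ ∑ l ∈ Finset.range (m + 1), (M ^ l) i j :=
          Finset.single_le_sum (fun l _ => pow_entry_nonneg' hM l i j) hmem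
      _ = (∑ l ∈ Finset.range (m + 1), M ^ l) i j := by
          rw [Matrix.sum_apply]
  · rw [Finset.mul_sum, Finset.sum_mul]
    exact Finset.sum_congr rfl fun l _ => by
      rw [← pow_succ, ← pow_succ']

lemma charpoly_eval_eq_det {m : Type*} [Fintype m] [DecidableEq m] (M : Matrix m m ℂ) (l : ℂ) :
    M.charpoly.eval l = (l • (1 : Matrix m m ℂ) - M).det := by
  rw [Matrix.charpoly]
  have h := RingHom.map_det (Polynomial.evalRingHom l) M.charmatrix
  have h' : (Polynomial.evalRingHom l) M.charmatrix.det = M.charmatrix.det.eval l := rfl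
  rw [h'] at h
  rw [h]
  congr 1
  ext i j
  by_cases hij : i = j <;>
    simp [Matrix.charmatrix_apply, Matrix.diagonal_apply, Matrix.one_apply, hij,
      RingHom.mapMatrix_apply, Matrix.map_apply, apply_ite (Polynomial.eval l)]

lemma mem_spectrum_iff_det {m : Type*} [Fintype m] [DecidableEq m] (M : Matrix m m ℂ) (l : ℂ) :
    l ∈ spectrum ℂ M ↔ (l • (1 : Matrix m m ℂ) - M).det = 0 := by
  rw [spectrum.mem_iff, Algebra.algebraMap_eq_smul_one,
    Matrix.isUnit_iff_isUnit_det, isUnit_iff_ne_zero, not_not]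

end Helpers

lemma exists_perron {n : ℕ} [Nonempty (Fin n)] (A : Matrix (Fin n) (Fin n) ℝ)
    (hA : ∀ i j, 0 ≤ A i j) (hirr : Irred A) :
    ∃ z : Fin n → ℝ, (∀ i, 0 < z i) ∧ A *ᵥ z = specRad A • z ∧ 0 < specRad A := by
  classical
  set t := specRad A with ht_def
  set Ac := A.map Complex.ofReal with hAc_def
  have hspec : ∀ l : ℂ, l ∈ spectrum ℂ Ac ↔ (l • (1 : Matrix (Fin n) (Fin n) ℂ) - Ac).det = 0 :=
    fun l => mem_spectrum_iff_det Ac l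
  have hfin : (spectrum ℂ Ac).Finite := by
    refine (Polynomial.finite_setOf_isRoot (Matrix.charpoly_monic Ac).ne_zero).subset ?_
    intro l hl
    rw [Set.mem_setOf_eq, Polynomial.IsRoot, charpoly_eval_eq_det]
    exact (hspec l).mp hl
  have hnsp : (spectrum ℂ Ac).Nonempty := by
    obtain ⟨l, hl⟩ := Complex.exists_root (f := Matrix.charpoly Ac) (by
      rw [Matrix.charpoly_degree_eq_dim]
      exact_mod_cast Fintype.card_pos)
    exact ⟨l, (hspec l).mpr (by rw [← charpoly_eval_eq_det]; exact hl)⟩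
  have htsup : t = sSup ((fun z : ℂ => ‖z‖) '' spectrum ℂ Ac) := rfl
  have htmem : t ∈ (fun z : ℂ => ‖z‖) '' spectrum ℂ Ac := by
    rw [htsup]; exact Set.Nonempty.csSup_mem (hnsp.image _) (hfin.image _)
  obtain ⟨l₀, hl₀spec, hl₀abs⟩ := htmem
  have htub : ∀ l ∈ spectrum ℂ Ac, ‖l‖ ≤ t := fun l hl =>
    le_csSup (hfin.image _).bddAbove ⟨l, hl, rfl⟩
  have ht0 : 0 ≤ t := by rw [← show ‖l₀‖ = t from hl₀abs]; exact norm_nonneg l₀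
  have hrealdet : ∀ r : ℝ, t < r → (r • (1 : Matrix (Fin n) (Fin n) ℝ) - A).det ≠ 0 := by
    intro r hr hdet0
    have hmap : (Complex.ofRealHom.mapMatrix (r • (1 : Matrix (Fin n) (Fin n) ℝ) - A))
        = (r : ℂ) • (1 : Matrix (Fin n) (Fin n) ℂ) - Ac := by
      ext i j
      by_cases hij : i = j <;>
        simp [RingHom.mapMatrix_apply, Matrix.map_apply, Matrix.one_apply, hij, hAc_def]
    have h := RingHom.map_det Complex.ofRealHom (r • (1 : Matrix (Fin n) (Fin n) ℝ) - A)
    rw [hdet0, hmap] at h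
    have hsp : (r : ℂ) ∈ spectrum ℂ Ac := (hspec _).mpr (by simpa using h.symm)
    have h1 := htub _ hsp
    rw [Complex.norm_real, Real.norm_eq_abs] at h1
    have h2 := le_abs_self r
    linarith
  have hdet0 : (l₀ • (1 : Matrix (Fin n) (Fin n) ℂ) - Ac).det = 0 := (hspec l₀).mp hl₀spec
  obtain ⟨v, hv0, hveq⟩ := Matrix.exists_mulVec_eq_zero_iff.mpr hdet0
  have hAcv : Ac *ᵥ v = l₀ • v := by
    rw [Matrix.sub_mulVec, Matrix.smul_mulVec, Matrix.one_mulVec] at hveq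
    have := sub_eq_zero.mp hveq; exact this.symm
  set u₀ : Fin n → ℝ := fun i => ‖v i‖ with hu₀_def
  have hu₀nn : ∀ i, 0 ≤ u₀ i := fun i => norm_nonneg _
  obtain ⟨j₁, hj₁⟩ : ∃ j, v j ≠ 0 := Function.ne_iff.mp hv0
  have hu₀j₁ : 0 < u₀ j₁ := norm_pos_iff.mpr hj₁
  have hsub : ∀ i, t * u₀ i ≤ (A *ᵥ u₀) i := by
    intro i
    have h1 : (A *ᵥ u₀) i = ∑ j, ‖Ac i j * v j‖ := by
      rw [mulVec_entry']
      refine Finset.sum_congr rfl fun j _ => ?_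
      rw [show Ac i j = ((A i j : ℝ) : ℂ) from rfl, norm_mul, Complex.norm_real, Real.norm_eq_abs,
        abs_of_nonneg (hA i j)]
    have h2 : ‖(Ac *ᵥ v) i‖ ≤ ∑ j, ‖Ac i j * v j‖ := by
      exact norm_sum_le Finset.univ (fun j => Ac i j * v j)
    have h3 : ‖(Ac *ᵥ v) i‖ = t * u₀ i := by
      rw [hAcv]
      simp only [Pi.smul_apply, smul_eq_mul, norm_mul]
      rw [show ‖l₀‖ = t from hl₀abs]
    rw [h1, ← h3]
    exact h2
  obtain ⟨Q, hQpos, hQcomm⟩ := exists_posQ hA hirr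
  have hQnn : ∀ i j, 0 ≤ Q i j := fun i j => (hQpos i j).le
  set z := Q *ᵥ u₀ with hz_def
  have hzpos : ∀ i, 0 < z i := by
    intro i
    rw [hz_def, mulVec_entry']
    calc (0:ℝ) < Q i j₁ * u₀ j₁ := mul_pos (hQpos i j₁) hu₀j₁
      _ ≤ ∑ j, Q i j * u₀ j := Finset.single_le_sum
          (fun j _ => mul_nonneg (hQnn i j) (hu₀nn j)) (Finset.mem_univ j₁)
  have hswap : ∀ x : Fin n → ℝ, A *ᵥ (Q *ᵥ x) = Q *ᵥ (A *ᵥ x) := by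
    intro x
    rw [Matrix.mulVec_mulVec, Matrix.mulVec_mulVec, hQcomm]
  have hAzge : ∀ i, t * z i ≤ (A *ᵥ z) i := by
    intro i
    rw [hz_def, hswap]
    have h1 : ∀ j, (t • u₀) j ≤ (A *ᵥ u₀) j := by
      intro j
      simp only [Pi.smul_apply, smul_eq_mul]
      exact hsub j
    have h2 := mulVec_mono' hQnn h1 i
    rw [Matrix.mulVec_smul] at h2
    calc t * (Q *ᵥ u₀) i = (t • (Q *ᵥ u₀)) i := rfl
      _ ≤ (Q *ᵥ (A *ᵥ u₀)) i := h2
  set Sset : Set ℝ := {θ | ∃ w : Fin n → ℝ, (∀ i, 0 < w i) ∧ ∀ i, (A *ᵥ w) i ≤ θ * w i}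
    with hSset_def
  have hSne : Sset.Nonempty := by
    refine ⟨∑ i, ∑ j, A i j, fun _ => 1, fun _ => one_pos, fun i => ?_⟩
    rw [mulVec_entry']
    simp only [mul_one]
    exact Finset.single_le_sum (f := fun i => ∑ j, A i j)
      (fun i _ => Finset.sum_nonneg fun j _ => hA i j) (Finset.mem_univ i)
  have hSbdd : BddBelow Sset := by
    refine ⟨0, fun θ hθ => ?_⟩
    obtain ⟨w, hw, hwθ⟩ := hθ
    have i : Fin n := Classical.arbitrary _
    by_contra hneg
    push_neg at hneg
    have h1 : (A *ᵥ w) i ≤ θ * w i := hwθ i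
    have h2 : 0 ≤ (A *ᵥ w) i := mulVec_nonneg' hA (fun j => (hw j).le) i
    nlinarith [hw i]
  have hkeyS : ∀ r : ℝ, (∃ θ ∈ Sset, θ < r) →
      IsUnit (r • (1 : Matrix (Fin n) (Fin n) ℝ) - A).det ∧
        ∀ i j, 0 ≤ (r • (1 : Matrix (Fin n) (Fin n) ℝ) - A)⁻¹ i j := by
    rintro r ⟨θ, ⟨w, hw, hwθ⟩, hθr⟩
    exact key_lemma hA hw hθr hwθ
  have hstep : ∀ r : ℝ, IsUnit (r • (1 : Matrix (Fin n) (Fin n) ℝ) - A).det →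
      (∀ i j, 0 ≤ (r • (1 : Matrix (Fin n) (Fin n) ℝ) - A)⁻¹ i j) →
      ∃ θ ∈ Sset, θ < r := by
    intro r hdet hNnn
    set N := (r • (1 : Matrix (Fin n) (Fin n) ℝ) - A)⁻¹ with hN_def
    set w := N *ᵥ (fun _ => 1) with hw_def
    have hwnn : ∀ i, 0 ≤ w i := mulVec_nonneg' hNnn (fun _ => zero_le_one)
    have hdetN : N.det ≠ 0 := by
      have h := Matrix.nonsing_inv_mul _ hdet
      intro h0
      have h2 : N.det * (r • (1 : Matrix (Fin n) (Fin n) ℝ) - A).det = 1 := by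
        rw [← Matrix.det_mul, h, Matrix.det_one]
      rw [h0, zero_mul] at h2
      exact zero_ne_one h2
    have hwpos : ∀ i, 0 < w i := by
      intro i
      rcases (hwnn i).lt_or_eq with h | h
      · exact h
      · exfalso
        have hsum : ∑ j, N i j = 0 := by
          have h1 : w i = ∑ j, N i j := by
            rw [hw_def, mulVec_entry']
            simp
          rw [← h1, ← h]
        have hrow : ∀ j, N i j = 0 := fun j =>
          (Finset.sum_eq_zero_iff_of_nonneg (fun j _ => hNnn i j)).mp hsum j (Finset.mem_univ j)
        exact hdetN (Matrix.det_eq_zero_of_row_eq_zero i hrow)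
    have hMw : (r • (1 : Matrix (Fin n) (Fin n) ℝ) - A) *ᵥ w = fun _ => 1 := by
      rw [hw_def, Matrix.mulVec_mulVec, Matrix.mul_nonsing_inv _ hdet, Matrix.one_mulVec]
    have hAw : ∀ i, (A *ᵥ w) i = r * w i - 1 := by
      intro i
      have h1 := congrFun hMw i
      rw [smul_one_sub_mulVec] at h1
      have h' : r * w i - (A *ᵥ w) i = 1 := by simpa using h1
      linarith
    set W := Finset.univ.sup' Finset.univ_nonempty w with hW_def
    have hWpos : 0 < W :=
      lt_of_lt_of_le (hwpos (Classical.arbitrary _)) (Finset.le_sup' w (Finset.mem_univ _))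
    refine ⟨r - 1 / W, ⟨w, hwpos, fun i => ?_⟩, sub_lt_self r (by positivity)⟩
    rw [hAw i]
    have hwW : w i ≤ W := Finset.le_sup' w (Finset.mem_univ i)
    have h2 : 1 / W * w i ≤ 1 := by
      rw [one_div, inv_mul_le_iff₀ hWpos]
      simpa using hwW
    nlinarith [h2]
  set τ := sInf Sset with hτ_def
  have hτt : τ ≤ t := by
    by_contra hct
    push_neg at hct
    have hNτpos : ∀ r : ℝ, τ < r → ∀ i j,
        0 ≤ (r • (1 : Matrix (Fin n) (Fin n) ℝ) - A)⁻¹ i j := by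
      intro r hr
      obtain ⟨θ, hθS, hθr⟩ := exists_lt_of_csInf_lt hSne hr
      exact (hkeyS r ⟨θ, hθS, hθr⟩).2
    have hdetτ : (τ • (1 : Matrix (Fin n) (Fin n) ℝ) - A).det ≠ 0 := hrealdet τ hct
    have hFcont : Continuous (fun r : ℝ => r • (1 : Matrix (Fin n) (Fin n) ℝ) - A) := by
      apply continuous_matrix
      intro i j
      simp only [Matrix.sub_apply, Matrix.smul_apply, smul_eq_mul]
      exact (continuous_id.mul continuous_const).sub continuous_const
    have hentry : ∀ i j, ContinuousAt
        (fun r : ℝ => (r • (1 : Matrix (Fin n) (Fin n) ℝ) - A)⁻¹ i j) τ := by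
      intro i j
      have heq : (fun r : ℝ => (r • (1 : Matrix (Fin n) (Fin n) ℝ) - A)⁻¹ i j)
          = fun r : ℝ => ((r • (1 : Matrix (Fin n) (Fin n) ℝ) - A).det)⁻¹ *
              ((r • (1 : Matrix (Fin n) (Fin n) ℝ) - A).adjugate i j) := by
        funext r
        rw [Matrix.inv_def, Matrix.smul_apply, Ring.inverse_eq_inv, smul_eq_mul]
      rw [heq]
      refine ContinuousAt.mul ?_ ?_
      · exact (hFcont.matrix_det.continuousAt).inv₀ hdetτ
      · exact ((continuous_apply j).comp
          ((continuous_apply i).comp hFcont.matrix_adjugate)).continuousAt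
    have hNτ : ∀ i j, 0 ≤ (τ • (1 : Matrix (Fin n) (Fin n) ℝ) - A)⁻¹ i j := by
      intro i j
      have htd : Filter.Tendsto (fun r : ℝ => (r • (1 : Matrix (Fin n) (Fin n) ℝ) - A)⁻¹ i j)
          (nhdsWithin τ (Set.Ioi τ)) (nhds ((τ • (1 : Matrix (Fin n) (Fin n) ℝ) - A)⁻¹ i j)) :=
        ((hentry i j).continuousWithinAt).tendsto
      refine ge_of_tendsto htd ?_
      filter_upwards [eventually_mem_nhdsWithin] with r hr
      exact hNτpos r hr i j
    obtain ⟨θ, hθS, hθτ⟩ := hstep τ (isUnit_iff_ne_zero.mpr hdetτ) hNτ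
    exact absurd (csInf_le hSbdd hθS) (not_le.mpr hθτ)
  have hLemmaL : ∀ s : ℝ, ∀ y : Fin n → ℝ, (∀ i, 0 < y i) →
      (∀ i, s * y i ≤ (A *ᵥ y) i) → s ≤ t := by
    intro s y hy hsy
    by_contra hst
    push_neg at hst
    obtain ⟨θ, hθS, hθs⟩ := exists_lt_of_csInf_lt hSne (lt_of_le_of_lt hτt hst)
    set r := (θ + s) / 2 with hr_def
    have hθr : θ < r := by rw [hr_def]; linarith
    have hrs : r < s := by rw [hr_def]; linarith
    obtain ⟨w, hw, hwθ⟩ := hθS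
    obtain ⟨hdet, hNnn⟩ := key_lemma hA hw hθr hwθ
    set N := (r • (1 : Matrix (Fin n) (Fin n) ℝ) - A)⁻¹ with hN_def
    have hz1 : N *ᵥ ((r • (1 : Matrix (Fin n) (Fin n) ℝ) - A) *ᵥ y) = y := by
      rw [Matrix.mulVec_mulVec, Matrix.nonsing_inv_mul _ hdet, Matrix.one_mulVec]
    have hMy : ∀ i, ((r • (1 : Matrix (Fin n) (Fin n) ℝ) - A) *ᵥ y) i ≤ (r - s) * y i := by
      intro i
      rw [smul_one_sub_mulVec]
      have := hsy i
      simp only [Pi.sub_apply, Pi.smul_apply, smul_eq_mul]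
      linarith
    have i0 : Fin n := Classical.arbitrary _
    have h1 : y i0 ≤ (N *ᵥ fun i => (r - s) * y i) i0 := by
      calc y i0 = (N *ᵥ ((r • (1 : Matrix (Fin n) (Fin n) ℝ) - A) *ᵥ y)) i0 := by rw [hz1]
        _ ≤ (N *ᵥ fun i => (r - s) * y i) i0 := mulVec_mono' hNnn hMy i0
    have h2 : (N *ᵥ fun i => (r - s) * y i) i0 ≤ 0 := by
      rw [mulVec_entry']
      refine Finset.sum_nonpos fun j _ => ?_
      have h3 : (r - s) * y j ≤ 0 :=
        mul_nonpos_of_nonpos_of_nonneg (by linarith) (hy j).le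
      have h4 := mul_le_mul_of_nonneg_left h3 (hNnn i0 j)
      simpa using h4
    linarith [hy i0]
  have hAz : A *ᵥ z = t • z := by
    by_contra hne
    set r0 : Fin n → ℝ := fun i => (A *ᵥ z) i - t * z i with hr0_def
    have hr0nn : ∀ i, 0 ≤ r0 i := fun i => by
      rw [hr0_def]; have := hAzge i; simp only []; linarith
    obtain ⟨j₂, hj₂⟩ : ∃ j, r0 j ≠ 0 := by
      by_contra hall
      push_neg at hall
      apply hne
      funext i
      have h := hall i
      rw [hr0_def] at h
      simp only [sub_eq_zero] at h
      simp only [Pi.smul_apply, smul_eq_mul]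
      exact h
    have hr0j₂ : 0 < r0 j₂ := (hr0nn j₂).lt_of_ne (Ne.symm hj₂)
    set z' := Q *ᵥ z with hz'_def
    have hz'pos : ∀ i, 0 < z' i := by
      intro i
      rw [hz'_def, mulVec_entry']
      exact Finset.sum_pos (fun j _ => mul_pos (hQpos i j) (hzpos j)) Finset.univ_nonempty
    set e' := Q *ᵥ r0 with he'_def
    have he'pos : ∀ i, 0 < e' i := by
      intro i
      rw [he'_def, mulVec_entry']
      calc (0:ℝ) < Q i j₂ * r0 j₂ := mul_pos (hQpos i j₂) hr0j₂
        _ ≤ ∑ j, Q i j * r0 j := Finset.single_le_sum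
            (fun j _ => mul_nonneg (hQnn i j) (hr0nn j)) (Finset.mem_univ j₂)
    have hAz' : ∀ i, (A *ᵥ z') i = t * z' i + e' i := by
      intro i
      rw [hz'_def, hswap]
      have hAzeq : A *ᵥ z = t • z + r0 := by
        funext i'
        rw [hr0_def]
        simp only [Pi.add_apply, Pi.smul_apply, smul_eq_mul]
        ring
      rw [hAzeq, Matrix.mulVec_add, Matrix.mulVec_smul]
      simp only [Pi.add_apply, Pi.smul_apply, smul_eq_mul]
      rfl
    set ε := Finset.univ.inf' Finset.univ_nonempty (fun i => e' i / z' i) with hε_def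
    have hεpos : 0 < ε := by
      rw [hε_def, Finset.lt_inf'_iff]
      exact fun i _ => div_pos (he'pos i) (hz'pos i)
    have hcontra : t + ε ≤ t := by
      refine hLemmaL (t + ε) z' hz'pos fun i => ?_
      have h1 : ε ≤ e' i / z' i := Finset.inf'_le _ (Finset.mem_univ i)
      have h2 : ε * z' i ≤ e' i := (le_div_iff₀ (hz'pos i)).mp h1
      rw [hAz' i]
      nlinarith
    linarith
  obtain ⟨a, b, hab⟩ : ∃ a b, 0 < A a b := by
    have i : Fin n := Classical.arbitrary _
    cases hirr i i with
    | single h' => exact ⟨i, i, h'⟩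
    | tail h1 h2 => exact ⟨_, _, h2⟩
  have ht_pos : 0 < t := by
    have h1 : (A *ᵥ z) a = t * z a := by
      rw [hAz]; simp
    have h2 : A a b * z b ≤ (A *ᵥ z) a := by
      rw [mulVec_entry']
      exact Finset.single_le_sum (fun j _ => mul_nonneg (hA a j) (hzpos j).le)
        (Finset.mem_univ b)
    nlinarith [mul_pos hab (hzpos b), hzpos a]
  exact ⟨z, hzpos, hAz, ht_pos⟩

theorem perron_complement_well_defined_nonneg
    {n : ℕ} (A : Matrix (Fin n) (Fin n) ℝ)
    (hA_nonneg : ∀ i j, 0 ≤ A i j) (hA_irred : Irred A)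
    (S : Finset (Fin n)) (hS_nonempty : S.Nonempty) (hS_proper : S ≠ Finset.univ) :
    IsUnit (subm A Sᶜ Sᶜ - specRad A • 1) ∧
      ∀ i j, 0 ≤ red A S (specRad A) i j := by
  classical
  haveI : Nonempty (Fin n) := ⟨hS_nonempty.choose⟩
  obtain ⟨z, hzpos, hAz, htpos⟩ := exists_perron A hA_nonneg hA_irred
  set t := specRad A with ht_def
  obtain ⟨x₀, hx₀⟩ : ∃ x, x ∉ S := by
    by_contra h
    push_neg at h
    exact hS_proper (Finset.eq_univ_iff_forall.mpr h)
  have hx₀c : x₀ ∈ Sᶜ := Finset.mem_compl.mpr hx₀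
  haveI hι : Nonempty {x // x ∈ Sᶜ} := ⟨⟨x₀, hx₀c⟩⟩
  set B : Matrix (Sᶜ : Finset (Fin n)) (Sᶜ : Finset (Fin n)) ℝ := subm A Sᶜ Sᶜ with hB_def
  have hB : ∀ i j, 0 ≤ B i j := fun i j => hA_nonneg _ _
  set u : (Sᶜ : Finset (Fin n)) → ℝ := fun j => z j.1 with hu_def
  set d : (Sᶜ : Finset (Fin n)) → ℝ := fun j => ∑ i ∈ S, A j.1 i * z i with hd_def
  have hdnn : ∀ j, 0 ≤ d j := fun j =>
    Finset.sum_nonneg fun i _ => mul_nonneg (hA_nonneg _ _) (hzpos i).le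
  have hBu : B *ᵥ u = t • u - d := by
    funext j
    have h1 : (B *ᵥ u) j = ∑ i ∈ Sᶜ, A j.1 i * z i := by
      rw [mulVec_entry']
      exact Finset.sum_coe_sort (Sᶜ) (fun i => A j.1 i * z i)
    have h2 : ∑ i ∈ S, A j.1 i * z i + ∑ i ∈ Sᶜ, A j.1 i * z i = ∑ i, A j.1 i * z i :=
      Finset.sum_add_sum_compl S _
    have h3 : ∑ i, A j.1 i * z i = t * z j.1 := by
      have h := congrFun hAz j.1
      simpa [mulVec_entry'] using h
    simp only [Pi.sub_apply, Pi.smul_apply, smul_eq_mul, hu_def, hd_def]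
    rw [h1]
    linarith
  have hmain : ∀ a (h : Relation.TransGen (fun x y => 0 < A x y) a hS_nonempty.choose)
      (ha : a ∈ Sᶜ), ∃ k b, 0 < (B ^ k) ⟨a, ha⟩ b ∧ 0 < d b := by
    intro a h
    induction h using Relation.TransGen.head_induction_on with
    | single h' =>
        rename_i a'
        intro ha
        refine ⟨0, ⟨a', ha⟩, by simp [Matrix.one_apply], ?_⟩
        rw [hd_def]
        calc (0:ℝ) < A a' hS_nonempty.choose * z hS_nonempty.choose :=
              mul_pos h' (hzpos _)
          _ ≤ ∑ i ∈ S, A a' i * z i := Finset.single_le_sum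
              (fun i _ => mul_nonneg (hA_nonneg a' i) (hzpos i).le) hS_nonempty.choose_spec
    | head h' hTG ihp =>
        rename_i a' c
        intro ha
        by_cases hc : c ∈ S
        · refine ⟨0, ⟨a', ha⟩, by simp [Matrix.one_apply], ?_⟩
          rw [hd_def]
          calc (0:ℝ) < A a' c * z c := mul_pos h' (hzpos _)
            _ ≤ ∑ i ∈ S, A a' i * z i := Finset.single_le_sum
                (fun i _ => mul_nonneg (hA_nonneg a' i) (hzpos i).le) hc
        · have hcc : c ∈ Sᶜ := Finset.mem_compl.mpr hc
          obtain ⟨k, b, hkb, hdb⟩ := ihp hcc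
          refine ⟨k + 1, b, ?_, hdb⟩
          rw [pow_succ', Matrix.mul_apply]
          calc (0:ℝ) < B ⟨a', ha⟩ ⟨c, hcc⟩ * (B ^ k) ⟨c, hcc⟩ b := mul_pos h' hkb
            _ ≤ ∑ x, B ⟨a', ha⟩ x * (B ^ k) x b := Finset.single_le_sum
                (fun x _ => mul_nonneg (hB ⟨a', ha⟩ x) (pow_entry_nonneg' hB k x b))
                (Finset.mem_univ _)
  have reachB : ∀ j : (Sᶜ : Finset (Fin n)), ∃ k b, 0 < (B ^ k) j b ∧ 0 < d b := by
    intro j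
    have h := hA_irred j.1 hS_nonempty.choose
    exact hmain j.1 h j.2
  set kf : (Sᶜ : Finset (Fin n)) → ℕ := fun j => (reachB j).choose with hkf_def
  set m' := Finset.univ.sup kf with hm'_def
  set w : (Sᶜ : Finset (Fin n)) → ℝ := ∑ k ∈ Finset.range (m' + 1), (B ^ k) *ᵥ u with hw_def
  set e : (Sᶜ : Finset (Fin n)) → ℝ := ∑ k ∈ Finset.range (m' + 1), (B ^ k) *ᵥ d with he_def
  have hwent : ∀ j, w j = ∑ k ∈ Finset.range (m' + 1), ((B ^ k) *ᵥ u) j := by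
    intro j; rw [hw_def]; exact Finset.sum_apply _ _ _
  have heent : ∀ j, e j = ∑ k ∈ Finset.range (m' + 1), ((B ^ k) *ᵥ d) j := by
    intro j; rw [he_def]; exact Finset.sum_apply _ _ _
  have hepos : ∀ j, 0 < e j := by
    intro j
    obtain ⟨b, hkb, hdb⟩ := (reachB j).choose_spec
    have hkm : kf j ≤ m' := Finset.le_sup (Finset.mem_univ j)
    rw [heent j]
    have hterm : 0 < ((B ^ kf j) *ᵥ d) j := by
      rw [mulVec_entry']
      calc (0:ℝ) < (B ^ kf j) j b * d b := mul_pos hkb hdb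
        _ ≤ ∑ x, (B ^ kf j) j x * d x := Finset.single_le_sum
            (fun x _ => mul_nonneg (pow_entry_nonneg' hB (kf j) j x) (hdnn x))
            (Finset.mem_univ b)
    exact lt_of_lt_of_le hterm (Finset.single_le_sum
      (fun k _ => mulVec_nonneg' (pow_entry_nonneg' hB k) hdnn j)
      (Finset.mem_range.mpr (by omega)))
  have hwpos : ∀ j, 0 < w j := by
    intro j
    rw [hwent j]
    have h0 : ((B ^ 0) *ᵥ u) j = u j := by rw [pow_zero, Matrix.one_mulVec]
    have h1 : 0 < ((B ^ 0) *ᵥ u) j := by rw [h0]; exact hzpos j.1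
    exact lt_of_lt_of_le h1 (Finset.single_le_sum
      (fun k _ => mulVec_nonneg' (pow_entry_nonneg' hB k) (fun i => (hzpos i.1).le) j)
      (Finset.mem_range.mpr (by omega)))
  have hBw : B *ᵥ w = t • w - e := by
    rw [hw_def, he_def]
    have h1 : B *ᵥ (∑ k ∈ Finset.range (m' + 1), (B ^ k) *ᵥ u)
        = ∑ k ∈ Finset.range (m' + 1), B *ᵥ ((B ^ k) *ᵥ u) := by
      exact map_sum (Matrix.mulVecLin B) (fun k => (B ^ k) *ᵥ u) (Finset.range (m' + 1))
    rw [h1]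
    have h2 : ∀ k, B *ᵥ ((B ^ k) *ᵥ u) = t • ((B ^ k) *ᵥ u) - (B ^ k) *ᵥ d := by
      intro k
      rw [Matrix.mulVec_mulVec, ← pow_succ', pow_succ, ← Matrix.mulVec_mulVec, hBu,
        Matrix.mulVec_sub, Matrix.mulVec_smul]
    rw [Finset.sum_congr rfl fun k _ => h2 k, Finset.sum_sub_distrib, Finset.smul_sum]
  set ε := Finset.univ.inf' Finset.univ_nonempty (fun j => e j / w j) with hε_def
  have hεpos : 0 < ε := by
    rw [hε_def, Finset.lt_inf'_iff]
    exact fun j _ => div_pos (hepos j) (hwpos j)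
  have hBwle : ∀ j, (B *ᵥ w) j ≤ (t - ε) * w j := by
    intro j
    have h1 : (B *ᵥ w) j = t * w j - e j := by
      rw [hBw]; simp
    have h2 : ε ≤ e j / w j := Finset.inf'_le _ (Finset.mem_univ j)
    have h3 : ε * w j ≤ e j := (le_div_iff₀ (hwpos j)).mp h2
    rw [h1]
    nlinarith
  have hθt : t - ε < t := by linarith
  obtain ⟨hdet, hNnn⟩ := key_lemma hB hwpos hθt hBwle
  have hUnit : IsUnit (t • (1 : Matrix (Sᶜ : Finset (Fin n)) (Sᶜ : Finset (Fin n)) ℝ) - B) :=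
    (Matrix.isUnit_iff_isUnit_det _).mpr hdet
  have hGoal1 : IsUnit (subm A Sᶜ Sᶜ - t • 1) := by
    have h := hUnit.neg
    rwa [neg_sub, hB_def] at h
  set N := (t • (1 : Matrix (Sᶜ : Finset (Fin n)) (Sᶜ : Finset (Fin n)) ℝ) - B)⁻¹ with hN_def
  have hGinv : (subm A Sᶜ Sᶜ - t • 1)⁻¹ = -N := by
    apply Matrix.inv_eq_right_inv
    have h1 : (subm A Sᶜ Sᶜ - t • (1 : Matrix (Sᶜ : Finset (Fin n)) (Sᶜ : Finset (Fin n)) ℝ))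
        = -(t • 1 - B) := by rw [neg_sub, hB_def]
    rw [h1, neg_mul_neg]
    exact Matrix.mul_nonsing_inv _ hdet
  refine ⟨hGoal1, ?_⟩
  intro i j
  have hred : red A S t i j = subm A S S i j + (subm A S Sᶜ * N * subm A Sᶜ S) i j := by
    simp only [red, hGinv, Matrix.sub_apply, Matrix.mul_neg, Matrix.neg_mul,
      Matrix.neg_apply, sub_neg_eq_add]
  rw [hred]
  refine add_nonneg (hA_nonneg _ _) ?_
  rw [Matrix.mul_apply]
  refine Finset.sum_nonneg fun q _ => ?_
  rw [Matrix.mul_apply]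
  exact mul_nonneg (Finset.sum_nonneg fun p _ =>
    mul_nonneg (hA_nonneg _ _) (hNnn p q)) (hA_nonneg _ _)
end

section
/- Let A be a symmetric nonnegative irreducible n×n matrix with spectral radius ρ and Perron eigenvector v, and let a ≠ b be two indices. Then v_a = v_b if and only if the 2×2 Perron complement P_{{a,b}}(A) = A_{SS} − A_{SS̄}(A_{S̄S̄} − ρI)⁻¹ A_{S̄S} (with S = {a,b}) has equal diagonal entries, i.e., the transposition of a and b is an automorphism of P_{{a,b}}(A). -/
open Matrix

lemma zero_step {n : ℕ} (A : Matrix (Fin n) (Fin n) ℝ) (hnn : ∀ i j, 0 ≤ A i j)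
    (ρ : ℝ) (w : Fin n → ℝ) (hw : ∀ i, 0 ≤ w i) (heig : A *ᵥ w = ρ • w)
    {i j : Fin n} (hA : 0 < A i j) (hwi : w i = 0) : w j = 0 := by
  have h1 : (A *ᵥ w) i = 0 := by rw [heig]; simp [hwi]
  have h2 : ∑ k, A i k * w k = 0 := h1
  have h3 := (Finset.sum_eq_zero_iff_of_nonneg
    (fun k _ => mul_nonneg (hnn i k) (hw k))).mp h2 j (Finset.mem_univ j)
  exact (mul_eq_zero.mp h3).resolve_left (ne_of_gt hA)

lemma zero_prop {n : ℕ} (A : Matrix (Fin n) (Fin n) ℝ) (hnn : ∀ i j, 0 ≤ A i j)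
    (ρ : ℝ) (w : Fin n → ℝ) (hw : ∀ i, 0 ≤ w i) (heig : A *ᵥ w = ρ • w)
    {i j : Fin n} (hij : Relation.TransGen (fun a b => 0 < A a b) i j)
    (hwi : w i = 0) : w j = 0 := by
  induction hij with
  | single h => exact zero_step A hnn ρ w hw heig h hwi
  | tail _ h ih => exact zero_step A hnn ρ w hw heig h ih

lemma eig_unique {n : ℕ} (A : Matrix (Fin n) (Fin n) ℝ) (hnn : ∀ i j, 0 ≤ A i j)
    (hirr : Irred A) (v : Fin n → ℝ) (hv : ∀ i, 0 < v i) (ρ : ℝ)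
    (heig : A *ᵥ v = ρ • v) (u : Fin n → ℝ) (hu : A *ᵥ u = ρ • u) (hn : 0 < n) :
    ∃ t : ℝ, ∀ i, u i = t * v i := by
  have hne : (Finset.univ : Finset (Fin n)).Nonempty := ⟨⟨0, hn⟩, Finset.mem_univ _⟩
  set t := Finset.univ.inf' hne (fun i => u i / v i) with ht
  obtain ⟨i0, _, hi0⟩ := Finset.exists_mem_eq_inf' hne (fun i => u i / v i)
  refine ⟨t, fun j => ?_⟩
  set w : Fin n → ℝ := fun i => u i - t * v i with hwdef
  have hwnn : ∀ i, 0 ≤ w i := by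
    intro i
    have : t ≤ u i / v i := Finset.inf'_le _ (Finset.mem_univ i)
    have := (le_div_iff₀ (hv i)).mp this
    simpa [hwdef] using by linarith
  have hweig : A *ᵥ w = ρ • w := by
    have : w = u - t • v := by funext i; simp [hwdef]
    rw [this, mulVec_sub, mulVec_smul, hu, heig]
    funext i; simp; ring
  have hwi0 : w i0 = 0 := by
    have : u i0 / v i0 = t := hi0.symm
    have := (div_eq_iff (ne_of_gt (hv i0))).mp this
    simp [hwdef, this]
  have := zero_prop A hnn ρ w hwnn hweig (hirr i0 j) hwi0
  have : u j - t * v j = 0 := this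
  linarith

lemma C_inv {n : ℕ} (A : Matrix (Fin n) (Fin n) ℝ) (h_symm : A.IsSymm)
    (hnn : ∀ i j, 0 ≤ A i j) (hirr : Irred A)
    (v : Fin n → ℝ) (hv : ∀ i, 0 < v i) (ρ : ℝ) (hρ : 0 ≤ ρ)
    (heig : A *ᵥ v = ρ • v) (S : Finset (Fin n)) {a : Fin n} (ha : a ∈ S) :
    IsUnit (subm A Sᶜ Sᶜ - ρ • (1 : Matrix ↥Sᶜ ↥Sᶜ ℝ)).det := by
  rw [isUnit_iff_ne_zero]
  intro hdet
  obtain ⟨x, hx0, hx⟩ := (Matrix.exists_mulVec_eq_zero_iff).mpr hdet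
  have hBx : subm A Sᶜ Sᶜ *ᵥ x = ρ • x := by
    have := hx
    rw [sub_mulVec, smul_mulVec, one_mulVec, sub_eq_zero] at this
    exact this
  set w : Fin n → ℝ := fun i => if h : i ∈ Sᶜ then |x ⟨i, h⟩| else 0 with hwdef
  have hwnn : ∀ i, 0 ≤ w i := by
    intro i; simp only [hwdef]; split <;> positivity
  have hwmem : ∀ (j : {y // y ∈ Sᶜ}), w j.1 = |x j| := by
    rintro ⟨j, hj⟩; simp only [hwdef]; rw [dif_pos hj]
  have h_row : ∀ i, (A *ᵥ w) i = ∑ j ∈ Sᶜ.attach, A i j.1 * |x j| := by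
    intro i
    have h1 : (A *ᵥ w) i = ∑ j, A i j * w j := rfl
    rw [h1, ← Finset.sum_subset (Finset.subset_univ Sᶜ)
      (by intro j _ hj; simp only [hwdef]; rw [dif_neg hj, mul_zero]),
      ← Finset.sum_attach Sᶜ (fun j => A i j * w j)]
    exact Finset.sum_congr rfl fun j _ => by rw [hwmem j]
  have hge : ∀ i, ρ * w i ≤ (A *ᵥ w) i := by
    intro i
    by_cases hi : i ∈ Sᶜ
    · have h2 : (subm A Sᶜ Sᶜ *ᵥ x) ⟨i, hi⟩ = ρ * x ⟨i, hi⟩ := by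
        rw [hBx]; rfl
      have h3 : ∑ j ∈ Sᶜ.attach, A i j.1 * x j = ρ * x ⟨i, hi⟩ := by
        rw [← h2]; rw [← Finset.univ_eq_attach]; rfl
      have h4 : ρ * w i = |ρ * x ⟨i, hi⟩| := by
        rw [hwmem ⟨i, hi⟩, abs_mul, abs_of_nonneg hρ]
      rw [h4, ← h3, h_row i]
      calc |∑ j ∈ Sᶜ.attach, A i j.1 * x j| ≤ ∑ j ∈ Sᶜ.attach, |A i j.1 * x j| :=
            Finset.abs_sum_le_sum_abs _ _
        _ = ∑ j ∈ Sᶜ.attach, A i j.1 * |x j| := by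
            exact Finset.sum_congr rfl fun j _ => by
              rw [abs_mul, abs_of_nonneg (hnn i j.1)]
    · have hwi : w i = 0 := by simp only [hwdef]; rw [dif_neg hi]
      rw [hwi, mul_zero, h_row i]
      exact Finset.sum_nonneg fun j _ => mul_nonneg (hnn i j.1) (abs_nonneg _)
  have hdot : v ⬝ᵥ (A *ᵥ w) = ρ * (v ⬝ᵥ w) := by
    rw [Matrix.dotProduct_mulVec]
    have h5 : v ᵥ* A = ρ • v := by
      rw [← Matrix.mulVec_transpose, h_symm.eq, heig]
    rw [h5, smul_dotProduct, smul_eq_mul]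
  have hsum : ∑ i, v i * ((A *ᵥ w) i - ρ * w i) = 0 := by
    have e1 : ∑ i, v i * ((A *ᵥ w) i - ρ * w i)
        = v ⬝ᵥ (A *ᵥ w) - ρ * (v ⬝ᵥ w) := by
      simp only [dotProduct, mul_sub, Finset.sum_sub_distrib, Finset.mul_sum]
      congr 1
      exact Finset.sum_congr rfl fun i _ => by ring
    rw [e1, hdot, sub_self]
  have heq : ∀ i, v i * ((A *ᵥ w) i - ρ * w i) = 0 := fun i =>
    (Finset.sum_eq_zero_iff_of_nonneg fun i _ =>
      mul_nonneg (hv i).le (sub_nonneg.mpr (hge i))).mp hsum i (Finset.mem_univ i)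
  have hweig : A *ᵥ w = ρ • w := by
    funext i
    have := heq i
    have h6 : (A *ᵥ w) i - ρ * w i = 0 :=
      (mul_eq_zero.mp this).resolve_left (ne_of_gt (hv i))
    simp only [Pi.smul_apply, smul_eq_mul]; linarith
  have hwa : w a = 0 := by
    have haS : a ∉ Sᶜ := by simp [ha]
    simp only [hwdef]; rw [dif_neg haS]
  apply hx0
  funext j
  have := zero_prop A hnn ρ w hwnn hweig (hirr a j.1) hwa
  rw [hwmem j] at this
  exact abs_eq_zero.mp this

lemma mulVec_split {n : ℕ} (A : Matrix (Fin n) (Fin n) ℝ) (u : Fin n → ℝ)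
    (S : Finset (Fin n)) (i : Fin n) :
    (A *ᵥ u) i = (∑ j ∈ S.attach, A i j.1 * u j.1) + ∑ j ∈ Sᶜ.attach, A i j.1 * u j.1 := by
  have h1 : (A *ᵥ u) i = ∑ j, A i j * u j := rfl
  rw [h1, ← Finset.sum_add_sum_compl S (fun j => A i j * u j),
    ← Finset.sum_attach S (fun j => A i j * u j),
    ← Finset.sum_attach Sᶜ (fun j => A i j * u j)]

lemma subm_mulVec {n : ℕ} (M : Matrix (Fin n) (Fin n) ℝ) (S T : Finset (Fin n))
    (x : ↥T → ℝ) (i : ↥S) :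
    (subm M S T *ᵥ x) i = ∑ j ∈ T.attach, M i.1 j.1 * x j := by
  rw [← Finset.univ_eq_attach]; rfl

lemma subm_transpose {n : ℕ} (M : Matrix (Fin n) (Fin n) ℝ) (hM : M.IsSymm)
    (S T : Finset (Fin n)) : (subm M S T)ᵀ = subm M T S := by
  funext i j
  simp only [Matrix.transpose_apply, subm]
  conv_lhs => rw [← hM.eq]
  rfl

theorem equal_centrality_iff_symmetric_perron_complement
    {n : ℕ} (A : Matrix (Fin n) (Fin n) ℝ) (h_symm : A.IsSymm)
    (hA_nonneg : ∀ i j, 0 ≤ A i j) (hA_irred : Irred A)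
    (v : Fin n → ℝ) (hv_pos : ∀ i, 0 < v i)
    (h_eig : A *ᵥ v = specRad A • v)
    (a b : Fin n) (hab : a ≠ b) :
    v a = v b ↔
      red A {a, b} (specRad A) ⟨a, by simp⟩ ⟨a, by simp⟩ =
        red A {a, b} (specRad A) ⟨b, by simp⟩ ⟨b, by simp⟩ := by
  set ρ := specRad A with hρdef
  set S : Finset (Fin n) := {a, b} with hSdef
  have ha : a ∈ S := by simp [hSdef]
  have hb : b ∈ S := by simp [hSdef]
  set ia : ↥S := ⟨a, ha⟩ with hiadef
  set ib : ↥S := ⟨b, hb⟩ with hibdef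
  have hiaib : ia ≠ ib := fun h => hab (congrArg Subtype.val h)
  -- ρ ≥ 0
  have hρ0 : 0 ≤ ρ := by
    have h1 : (A *ᵥ v) a = ρ * v a := by rw [h_eig]; rfl
    have h2 : (0:ℝ) ≤ ∑ j, A a j * v j :=
      Finset.sum_nonneg fun j _ => mul_nonneg (hA_nonneg a j) (hv_pos j).le
    have h3 : (A *ᵥ v) a = ∑ j, A a j * v j := rfl
    rw [h3] at h1
    nlinarith [hv_pos a]
  -- notation
  set B : Matrix ↥Sᶜ ↥Sᶜ ℝ := subm A Sᶜ Sᶜ with hBdef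
  set C : Matrix ↥Sᶜ ↥Sᶜ ℝ := B - ρ • 1 with hCdef
  have hC : IsUnit C.det := C_inv A h_symm hA_nonneg hA_irred v hv_pos ρ hρ0 h_eig S ha
  set ASS : Matrix ↥S ↥S ℝ := subm A S S with hASSdef
  set ASc : Matrix ↥S ↥Sᶜ ℝ := subm A S Sᶜ with hAScdef
  set AcS : Matrix ↥Sᶜ ↥S ℝ := subm A Sᶜ S with hAcSdef
  set R : Matrix ↥S ↥S ℝ := red A S ρ with hRdef
  have hRform : R = ASS - ASc * C⁻¹ * AcS := rfl
  set vS : ↥S → ℝ := fun i => v i.1 with hvSdef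
  set vC : ↥Sᶜ → ℝ := fun i => v i.1 with hvCdef
  -- block equations
  have hSrows : ∀ i : ↥S, (ASS *ᵥ vS) i + (ASc *ᵥ vC) i = ρ * vS i := by
    intro i
    rw [subm_mulVec, subm_mulVec]
    have := mulVec_split A v S i.1
    rw [h_eig] at this
    simpa using this.symm
  have hCrows : AcS *ᵥ vS + B *ᵥ vC = ρ • vC := by
    funext i
    rw [Pi.add_apply, subm_mulVec, subm_mulVec]
    have := mulVec_split A v S i.1
    rw [h_eig] at this
    simpa using this.symm
  -- vC in terms of vS
  have hCvC : C *ᵥ vC = -(AcS *ᵥ vS) := by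
    rw [hCdef, sub_mulVec, smul_mulVec, one_mulVec]
    have : B *ᵥ vC = ρ • vC - AcS *ᵥ vS := by
      rw [← hCrows]; abel
    rw [this]; abel
  have hvC : C⁻¹ *ᵥ (AcS *ᵥ vS) = -vC := by
    have h1 : C⁻¹ *ᵥ (C *ᵥ vC) = vC := by
      rw [mulVec_mulVec, Matrix.nonsing_inv_mul C hC, one_mulVec]
    rw [← neg_eq_iff_eq_neg, ← h1, hCvC, mulVec_neg]
  -- R vS = ρ vS
  have hRvS : R *ᵥ vS = ρ • vS := by
    rw [hRform, sub_mulVec]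
    have h1 : (ASc * C⁻¹ * AcS) *ᵥ vS = ASc *ᵥ (C⁻¹ *ᵥ (AcS *ᵥ vS)) := by
      rw [← mulVec_mulVec, ← mulVec_mulVec]
    rw [h1, hvC, mulVec_neg, sub_neg_eq_add]
    funext i
    rw [Pi.add_apply, hSrows i]; rfl
  -- sums over S
  have hSelim : ∀ x : ↥S, x = ia ∨ x = ib := by
    rintro ⟨x, hx⟩
    rcases Finset.mem_insert.mp hx with h | h
    · exact Or.inl (Subtype.ext h)
    · exact Or.inr (Subtype.ext (Finset.mem_singleton.mp h))
  have huniv : (Finset.univ : Finset ↥S) = {ia, ib} := by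
    ext x
    simp only [Finset.mem_univ, Finset.mem_insert, Finset.mem_singleton, true_iff]
    exact hSelim x
  have hsum2 : ∀ f : ↥S → ℝ, ∑ j : ↥S, f j = f ia + f ib := by
    intro f; rw [huniv, Finset.sum_pair hiaib]
  -- entrywise eigen equations
  have e1 : R ia ia * v a + R ia ib * v b = ρ * v a := by
    have h1 : (R *ᵥ vS) ia = ∑ j : ↥S, R ia j * vS j := rfl
    rw [hRvS] at h1
    rw [hsum2] at h1
    exact h1.symm
  have e2 : R ib ia * v a + R ib ib * v b = ρ * v b := by
    have h1 : (R *ᵥ vS) ib = ∑ j : ↥S, R ib j * vS j := rfl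
    rw [hRvS] at h1
    rw [hsum2] at h1
    exact h1.symm
  -- symmetry of R
  have hCsymm : Cᵀ = C := by
    rw [hCdef, Matrix.transpose_sub, Matrix.transpose_smul, Matrix.transpose_one,
      hBdef, subm_transpose A h_symm]
  have hRsymm : R ia ib = R ib ia := by
    have t1 : AcSᵀ = ASc := subm_transpose A h_symm Sᶜ S
    have t2 : AScᵀ = AcS := subm_transpose A h_symm S Sᶜ
    have t3 : ASSᵀ = ASS := subm_transpose A h_symm S S
    have hT : Rᵀ = R := by
      rw [hRform, Matrix.transpose_sub, t3, Matrix.transpose_mul, Matrix.transpose_mul,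
        Matrix.transpose_nonsing_inv, hCsymm, t1, t2, ← Matrix.mul_assoc]
    exact congrFun (congrFun hT ib) ia
  -- final reduction: goal is about red A {a,b} ρ entries = R entries
  show v a = v b ↔ R ia ia = R ib ib
  constructor
  · intro hv
    rw [hv] at e1 e2
    have hvb := hv_pos b
    have : (R ia ia + R ia ib) * v b = (R ib ia + R ib ib) * v b := by linarith
    have h7 : R ia ia + R ia ib = R ib ia + R ib ib :=
      mul_right_cancel₀ (ne_of_gt hvb) this
    linarith [hRsymm]
  · intro hRR
    by_contra hne
    -- derive R ia ib = 0 and R ia ia = ρ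
    rw [hRR] at e1
    rw [hRsymm.symm] at e2
    -- e1 : R ib ib * v a + R ia ib * v b = ρ * v a
    -- e2 : R ia ib * v a + R ib ib * v b = ρ * v b
    have hd : (R ib ib - R ia ib) * (v a - v b) = ρ * (v a - v b) := by
      linear_combination e1 - e2
    have hs : (R ib ib + R ia ib) * (v a + v b) = ρ * (v a + v b) := by
      linear_combination e1 + e2
    have hsub : v a - v b ≠ 0 := sub_ne_zero.mpr hne
    have hadd : v a + v b ≠ 0 :=
      ne_of_gt (by linarith [hv_pos a, hv_pos b] : (0:ℝ) < v a + v b)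
    have hd' : R ib ib - R ia ib = ρ := mul_right_cancel₀ hsub hd
    have hs' : R ib ib + R ia ib = ρ := mul_right_cancel₀ hadd hs
    have hq0 : R ia ib = 0 := by linarith
    have hdiag : R ib ib = ρ := by linarith
    -- R acts as ρ • id
    have hRact : ∀ y : ↥S → ℝ, R *ᵥ y = ρ • y := by
      intro y
      funext i
      have h1 : (R *ᵥ y) i = ∑ j : ↥S, R i j * y j := rfl
      rw [h1, hsum2]
      rcases hSelim i with h | h <;> subst h
      · rw [hRR.trans hdiag, hq0]
        simp
      · rw [← hRsymm, hq0, hdiag]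
        simp
    -- construct second eigenvector
    set y : ↥S → ℝ := fun j => if j.1 = a then 1 else 0 with hydef
    set z : ↥Sᶜ → ℝ := -(C⁻¹ *ᵥ (AcS *ᵥ y)) with hzdef
    set u : Fin n → ℝ := fun i => if h : i ∈ Sᶜ then z ⟨i, h⟩ else (if i = a then 1 else 0)
      with hudef
    have huS : ∀ j : ↥S, u j.1 = y j := by
      rintro ⟨j, hj⟩
      have : j ∉ Sᶜ := by simp [hj]
      simp only [hudef, hydef]; rw [dif_neg this]
    have huC : ∀ j : ↥Sᶜ, u j.1 = z j := by
      rintro ⟨j, hj⟩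
      simp only [hudef]; rw [dif_pos hj]
    have hCz : B *ᵥ z = ρ • z - AcS *ᵥ y := by
      have h1 : C *ᵥ z = -(AcS *ᵥ y) := by
        rw [hzdef, mulVec_neg, mulVec_mulVec, mulVec_mulVec,
          Matrix.mul_nonsing_inv C hC, Matrix.one_mul]
      rw [hCdef, sub_mulVec, smul_mulVec, one_mulVec, sub_eq_iff_eq_add] at h1
      rw [h1]
      abel
    have hueig : A *ᵥ u = ρ • u := by
      funext i
      rw [mulVec_split A u S i]
      by_cases hi : i ∈ Sᶜ
      · have h1 : ∑ j ∈ S.attach, A i j.1 * u j.1 = (AcS *ᵥ y) ⟨i, hi⟩ := by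
          rw [subm_mulVec]
          exact Finset.sum_congr rfl fun j _ => by rw [huS j]
        have h2 : ∑ j ∈ Sᶜ.attach, A i j.1 * u j.1 = (B *ᵥ z) ⟨i, hi⟩ := by
          rw [subm_mulVec]
          exact Finset.sum_congr rfl fun j _ => by rw [huC j]
        rw [h1, h2, hCz]
        have h3 : u i = z ⟨i, hi⟩ := huC ⟨i, hi⟩
        simp [h3]
      · have hiS : i ∈ S := by simpa using hi
        have h1 : ∑ j ∈ S.attach, A i j.1 * u j.1 = (ASS *ᵥ y) ⟨i, hiS⟩ := by
          rw [subm_mulVec]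
          exact Finset.sum_congr rfl fun j _ => by rw [huS j]
        have h2 : ∑ j ∈ Sᶜ.attach, A i j.1 * u j.1 = (ASc *ᵥ z) ⟨i, hiS⟩ := by
          rw [subm_mulVec]
          exact Finset.sum_congr rfl fun j _ => by rw [huC j]
        have h4 : (ASc *ᵥ z) ⟨i, hiS⟩ = -((ASc * C⁻¹ * AcS) *ᵥ y) ⟨i, hiS⟩ := by
          rw [hzdef, ← mulVec_mulVec, ← mulVec_mulVec, mulVec_neg]
          rfl
        have h5 : (ASS *ᵥ y) ⟨i, hiS⟩ + (ASc *ᵥ z) ⟨i, hiS⟩ = (R *ᵥ y) ⟨i, hiS⟩ := by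
          rw [h4, hRform, sub_mulVec]
          simp [sub_eq_add_neg]
        rw [h1, h2, h5, hRact y]
        have h6 : u i = y ⟨i, hiS⟩ := huS ⟨i, hiS⟩
        simp [h6]
    -- contradiction via simplicity
    obtain ⟨t, ht⟩ := eig_unique A hA_nonneg hA_irred v hv_pos ρ h_eig u hueig
      (Nat.pos_of_ne_zero fun h => (h ▸ a).elim0)
    have hub : u b = 0 := by
      have h9 : y ib = 0 := by rw [hydef]; exact if_neg (Ne.symm hab)
      exact (huS ib).trans h9
    have hua : u a = 1 := by
      have h9 : y ia = 1 := by rw [hydef]; exact if_pos rfl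
      exact (huS ia).trans h9
    have ht0 : t = 0 := by
      have := ht b
      rw [hub] at this
      exact (mul_eq_zero.mp this.symm).resolve_right (ne_of_gt (hv_pos b))
    have := ht a
    rw [hua, ht0, zero_mul] at this
    exact one_ne_zero this
end
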